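/- For any set 𝒲 of probability measures on a measurable space (Y,𝒜): (i) α ↦ (α−1)·C_α(𝒲) is convex on (1,∞); (ii) if C_η(𝒲) < ∞ for some η ∈ (0,1), then C_α(𝒲) < ∞ for every α ∈ (0,1). -/

import Mathlib

open MeasureTheory ENNReal Filter Topology

namespace RenyiPaper

open scoped Classical

variable {Y : Type*} [MeasurableSpace Y]

/-- The Kullback–Leibler divergence, i.e. the order-`1` Rényi divergence, with
values in `EReal`; it is `⊤` unless `W ≪ Q` and the log-likelihood ratio is integrable. -/
noncomputable def klDiv (W Q : Measure Y) : EReal :=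
  if W ≪ Q ∧ Integrable (llr W Q) W then ((∫ y, llr W Q y ∂W : ℝ) : EReal) else ⊤

/-- The integral `∫ (dW/dν)^α (dQ/dν)^{1-α} dν` (with `ν = W + Q`) appearing in the
definition of the order-`α` Rényi divergence for `α ∈ (0,1) ∪ (1,∞)`. -/
noncomputable def renyiIntegral (α : ℝ) (W Q : Measure Y) : ℝ≥0∞ :=
  ∫⁻ y, (W.rnDeriv (W + Q) y) ^ α * (Q.rnDeriv (W + Q) y) ^ (1 - α) ∂(W + Q)

/-- The order-`α` Rényi divergence `D_α(W‖Q)` for `α ∈ (0,∞]`. -/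
noncomputable def renyiDiv (α : ℝ≥0∞) (W Q : Measure Y) : EReal :=
  if α = ∞ then
    ENNReal.log (essSup (fun y => W.rnDeriv (W + Q) y / Q.rnDeriv (W + Q) y) (W + Q))
  else if α = 1 then klDiv W Q
  else (((α.toReal - 1)⁻¹ : ℝ) : EReal) * ENNReal.log (renyiIntegral α.toReal W Q)

/-- `P` is a finitely supported probability mass function on `𝒲`. -/
def IsFinPrior (𝒲 : Set (Measure Y)) (P : Measure Y → ℝ≥0∞) : Prop :=
  (Function.support P).Finite ∧ Function.support P ⊆ 𝒲 ∧ ∑' W, P W = 1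

/-- A reference measure dominating every measure in the support of the prior `P`. -/
noncomputable def refMeasure (P : Measure Y → ℝ≥0∞) : Measure Y :=
  Measure.sum (fun W : Function.support P => (W : Measure Y))

/-- The order-`α` mean measure `μ_{α,P}`. -/
noncomputable def meanMeasure (α : ℝ≥0∞) (P : Measure Y → ℝ≥0∞) : Measure Y :=
  (refMeasure P).withDensity fun y =>
    if α = ∞ then ⨆ W : Function.support P, (W : Measure Y).rnDeriv (refMeasure P) y
    else (∑' W : Function.support P,
        P W * ((W : Measure Y).rnDeriv (refMeasure P) y) ^ α.toReal) ^ α.toReal⁻¹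

/-- The order-`α` Rényi mean `q_{α,P} = μ_{α,P} / ‖μ_{α,P}‖`. -/
noncomputable def renyiMean (α : ℝ≥0∞) (P : Measure Y → ℝ≥0∞) : Measure Y :=
  (meanMeasure α P Set.univ)⁻¹ • meanMeasure α P

/-- The order-`α` Rényi information `I_α(P;𝒲)` of the prior `P`. -/
noncomputable def renyiInfo (α : ℝ≥0∞) (P : Measure Y → ℝ≥0∞) : EReal :=
  if α = ∞ then ENNReal.log (meanMeasure ∞ P Set.univ)
  else if α = 1 then
    ∑' W : Function.support P,
      ((P (W : Measure Y)).toReal : EReal) * klDiv (W : Measure Y) (meanMeasure 1 P)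
  else ((α.toReal / (α.toReal - 1) : ℝ) : EReal) * ENNReal.log (meanMeasure α P Set.univ)

/-- The order-`α` Rényi capacity `C_α(𝒲)`. -/
noncomputable def renyiCapacity (α : ℝ≥0∞) (𝒲 : Set (Measure Y)) : EReal :=
  ⨆ P ∈ {P : Measure Y → ℝ≥0∞ | IsFinPrior 𝒲 P}, renyiInfo α P

/-- The order-`α` Rényi radius of `𝒲` relative to `Q`, `S_α(𝒲‖Q)`. -/
noncomputable def relRadius (α : ℝ≥0∞) (𝒲 : Set (Measure Y)) (Q : Measure Y) : EReal :=
  ⨆ W ∈ 𝒲, renyiDiv α W Q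

/-- The prior `P` viewed as a (discrete) measure on the space of measures. -/
noncomputable def priorMeasure (P : Measure Y → ℝ≥0∞) : Measure (Measure Y) :=
  Measure.sum (fun W : Function.support P => P (W : Measure Y) • Measure.dirac (W : Measure Y))

/-- The joint measure `P ⊛ 𝒲`, whose first marginal is `P` and whose conditional
distribution given `W` is `W` itself. -/
noncomputable def jointMeasure (P : Measure Y → ℝ≥0∞) : Measure (Measure Y × Y) :=
  Measure.sum (fun W : Function.support P =>
    P (W : Measure Y) • ((Measure.dirac (W : Measure Y)).prod (W : Measure Y)))

/-- The product measure `P ⊗ Q`. -/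
noncomputable def prodMeasure (P : Measure Y → ℝ≥0∞) (Q : Measure Y) : Measure (Measure Y × Y) :=
  (priorMeasure P).prod Q

/-- The total variation distance `‖μ - ν‖` between two (finite) measures. -/
noncomputable def tvDist (μ ν : Measure Y) : ℝ≥0∞ :=
  ∫⁻ y, (μ.rnDeriv (μ + ν) y - ν.rnDeriv (μ + ν) y)
      + (ν.rnDeriv (μ + ν) y - μ.rnDeriv (μ + ν) y) ∂(μ + ν)

/-- The total variation distance `‖P₁ - P₂‖ = Σ_W |P₁(W) - P₂(W)|` between two priors. -/
noncomputable def priorDist (P₁ P₂ : Measure Y → ℝ≥0∞) : ℝ≥0∞ :=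
  ∑' W, ((P₁ W - P₂ W) + (P₂ W - P₁ W))

/-- `Q` is an order-`α` Rényi center of `𝒲`: a probability measure whose relative
Rényi radius equals the Rényi capacity. -/
def IsRenyiCenter (α : ℝ≥0∞) (𝒲 : Set (Measure Y)) (Q : Measure Y) : Prop :=
  IsProbabilityMeasure Q ∧ relRadius α 𝒲 Q = renyiCapacity α 𝒲

/-!
For a finite prior `P` write `m(a) = ‖μ_{a,P}‖`, so that `I_a(P) = a/(a-1) · ln m(a)` and
`m(1) = 1`. Hölder's inequality, applied once to the sum defining the density of `μ_{a,P}` and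
once to its integral, makes `a ↦ a ln m(a)` convex on `(0,∞)`; its degenerate case with one
exponent `0` is the power-mean inequality, so `m` is nondecreasing. For `a > 1` we have
`(a-1) I_a(P) = a ln m(a)`, and a supremum of convex functions is convex. For `α, η ∈ (0,1)`,
monotonicity (if `η ≤ α`) or convexity between `α` and `1` (if `α < η`) gives
`ln m(η) ≤ κ ln m(α)` with `κ > 0` independent of `P`; hence `I_α(P) ≤ r I_η(P)` for a
constant `r > 0`, uniformly in `P`.
-/

end RenyiPaper

namespace ENNReal

variable {ι : Type*} [Fintype ι]

theorem sum_rpow_mul_rpow_le (f g : ι → ℝ≥0∞) {p q : ℝ} (hp : 0 ≤ p) (hq : 0 ≤ q)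
    (hpq : p + q = 1) : ∑ i, f i ^ p * g i ^ q ≤ (∑ i, f i) ^ p * (∑ i, g i) ^ q := by
  let _ : MeasurableSpace ι := ⊤
  simpa only [lintegral_count, tsum_fintype] using
    lintegral_mul_norm_pow_le (μ := (Measure.count : Measure ι)) measurable_from_top.aemeasurable
      measurable_from_top.aemeasurable hp hq hpq

theorem sum_mul_rpow_le_rpow_mul_rpow (w z : ι → ℝ≥0∞) {p q t : ℝ} (hp : 0 ≤ p) (hq : 0 ≤ q)
    (ht₀ : 0 ≤ t) (ht₁ : t ≤ 1) :
    ∑ i, w i * z i ^ (t * p + (1 - t) * q)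
      ≤ (∑ i, w i * z i ^ p) ^ t * (∑ i, w i * z i ^ q) ^ (1 - t) := by
  have ht₁' : 0 ≤ 1 - t := sub_nonneg.2 ht₁
  have hsplit : ∀ i, w i * z i ^ (t * p + (1 - t) * q)
      = (w i * z i ^ p) ^ t * (w i * z i ^ q) ^ (1 - t) := by
    intro i
    rw [mul_rpow_of_nonneg _ _ ht₀, mul_rpow_of_nonneg _ _ ht₁', ← rpow_mul, ← rpow_mul,
      mul_mul_mul_comm, ← rpow_add_of_nonneg _ _ ht₀ ht₁', add_sub_cancel, rpow_one,
      ← rpow_add_of_nonneg _ _ (by positivity) (by positivity), mul_comm p, mul_comm q]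
  simp_rw [hsplit]
  exact sum_rpow_mul_rpow_le _ _ ht₀ ht₁' (add_sub_cancel t 1)

theorem sum_mul_rpow_rpow_inv_le_of_le (w z : ι → ℝ≥0∞) (hw : ∑ i, w i = 1) {α β : ℝ}
    (hα : 0 < α) (hαβ : α ≤ β) :
    (∑ i, w i * z i ^ α) ^ α⁻¹ ≤ (∑ i, w i * z i ^ β) ^ β⁻¹ := by
  have hβ : 0 < β := hα.trans_le hαβ
  -- log-convexity between `β` and `0`, where the moment is `∑ i, w i = 1`
  have key := sum_mul_rpow_le_rpow_mul_rpow w z hβ.le le_rfl (div_pos hα hβ).le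
    (div_le_one_of_le₀ hαβ hβ.le)
  rw [show α / β * β + (1 - α / β) * 0 = α by
    rw [mul_zero, add_zero, div_mul_cancel₀ _ hβ.ne']] at key
  simp only [rpow_zero, mul_one, hw, one_rpow] at key
  calc (∑ i, w i * z i ^ α) ^ α⁻¹ ≤ ((∑ i, w i * z i ^ β) ^ (α / β)) ^ α⁻¹ :=
        rpow_le_rpow key (by positivity)
    _ = (∑ i, w i * z i ^ β) ^ β⁻¹ := by rw [← rpow_mul]; congr 1; field_simp

lemma toReal_mem_Ioo_zero_one {α : ℝ≥0∞} (h₀ : 0 < α) (h₁ : α < 1) :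
    α.toReal ∈ Set.Ioo 0 1 :=
  ⟨toReal_pos h₀.ne' h₁.ne_top, toReal_lt_of_lt_ofReal (by rwa [ofReal_one])⟩

end ENNReal

namespace RenyiPaper

variable {Y : Type*} [MeasurableSpace Y]

lemma lt_convex_combo {m a b t : ℝ} (ha : m < a) (hb : m < b) (ht₀ : 0 ≤ t) (ht₁ : t ≤ 1) :
    m < t * a + (1 - t) * b := by
  simpa using convex_Ioi m ha hb ht₀ (sub_nonneg.2 ht₁) (add_sub_cancel t 1)

noncomputable def meanDensity (P : Measure Y → ℝ≥0∞) (a : ℝ) (y : Y) : ℝ≥0∞ :=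
  (∑' W : Function.support P, P W * ((W : Measure Y).rnDeriv (refMeasure P) y) ^ a) ^ a⁻¹

noncomputable def meanMass (P : Measure Y → ℝ≥0∞) (a : ℝ) : ℝ≥0∞ :=
  ∫⁻ y, meanDensity P a y ∂refMeasure P

variable {P : Measure Y → ℝ≥0∞}

lemma meanMeasure_apply_univ {α : ℝ≥0∞} (hα : α ≠ ∞) :
    meanMeasure α P Set.univ = meanMass P α.toReal := by
  simp only [meanMeasure, withDensity_apply _ MeasurableSet.univ, Measure.restrict_univ,
    if_neg hα]
  rfl

lemma renyiInfo_eq_mul_log_meanMass {α : ℝ≥0∞} (hα : α ≠ ∞) (hα₁ : α ≠ 1) :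
    renyiInfo α P
      = ((α.toReal / (α.toReal - 1) : ℝ) : EReal) * ENNReal.log (meanMass P α.toReal) := by
  rw [renyiInfo, if_neg hα, if_neg hα₁, meanMeasure_apply_univ hα]

lemma measurable_meanDensity (hP : (Function.support P).Finite) (a : ℝ) :
    Measurable (meanDensity P a) :=
  have := hP.to_subtype
  (Measurable.tsum fun _ =>
    measurable_const.mul ((Measure.measurable_rnDeriv _ _).pow_const a)).pow_const _

lemma tsum_support_eq_one (hsum : ∑' W, P W = 1) : ∑' W : Function.support P, P W = 1 :=
  (tsum_subtype_eq_of_support_subset subset_rfl).trans hsum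

lemma meanDensity_le_of_le (hP : (Function.support P).Finite) (hsum : ∑' W, P W = 1)
    {a b : ℝ} (ha : 0 < a) (hab : a ≤ b) (y : Y) : meanDensity P a y ≤ meanDensity P b y := by
  have := hP.fintype
  simp only [meanDensity, tsum_fintype]
  refine ENNReal.sum_mul_rpow_rpow_inv_le_of_le _ _ ?_ ha hab
  rw [← tsum_fintype (L := SummationFilter.unconditional _)]
  exact tsum_support_eq_one hsum

lemma meanMass_le_of_le (hP : (Function.support P).Finite) (hsum : ∑' W, P W = 1)
    {a b : ℝ} (ha : 0 < a) (hab : a ≤ b) : meanMass P a ≤ meanMass P b :=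
  lintegral_mono (meanDensity_le_of_le hP hsum ha hab)

lemma meanDensity_le_rpow_mul_rpow (hP : (Function.support P).Finite) {a b t : ℝ}
    (ha : 0 < a) (hb : 0 < b) (ht₀ : 0 ≤ t) (ht₁ : t ≤ 1) (y : Y) :
    meanDensity P (t * a + (1 - t) * b) y
      ≤ meanDensity P a y ^ (t * a / (t * a + (1 - t) * b))
        * meanDensity P b y ^ ((1 - t) * b / (t * a + (1 - t) * b)) := by
  have := hP.fintype
  have hc : 0 < t * a + (1 - t) * b := lt_convex_combo ha hb ht₀ ht₁
  simp only [meanDensity, tsum_fintype]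
  refine (rpow_le_rpow (ENNReal.sum_mul_rpow_le_rpow_mul_rpow _ _ ha.le hb.le ht₀ ht₁)
    (inv_nonneg.2 hc.le)).trans_eq ?_
  rw [mul_rpow_of_nonneg _ _ (inv_nonneg.2 hc.le), ← rpow_mul, ← rpow_mul, ← rpow_mul,
    ← rpow_mul]
  congr 2 <;> field_simp

lemma meanMass_le_rpow_mul_rpow (hP : (Function.support P).Finite) {a b t : ℝ}
    (ha : 0 < a) (hb : 0 < b) (ht₀ : 0 ≤ t) (ht₁ : t ≤ 1) :
    meanMass P (t * a + (1 - t) * b)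
      ≤ meanMass P a ^ (t * a / (t * a + (1 - t) * b))
        * meanMass P b ^ ((1 - t) * b / (t * a + (1 - t) * b)) := by
  have hc : 0 < t * a + (1 - t) * b := lt_convex_combo ha hb ht₀ ht₁
  exact (lintegral_mono (meanDensity_le_rpow_mul_rpow hP ha hb ht₀ ht₁)).trans
    (ENNReal.lintegral_mul_norm_pow_le (measurable_meanDensity hP a).aemeasurable
      (measurable_meanDensity hP b).aemeasurable (by positivity)
      (div_nonneg (mul_nonneg (sub_nonneg.2 ht₁) hb.le) hc.le) (by field_simp))

lemma meanMass_one (hP : (Function.support P).Finite) (hsum : ∑' W, P W = 1)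
    (hprob : ∀ W ∈ Function.support P, IsProbabilityMeasure W) : meanMass P 1 = 1 := by
  have := hP.to_subtype
  have (W : Function.support P) : IsProbabilityMeasure (W : Measure Y) := hprob W W.2
  have : SigmaFinite (refMeasure P) := sum.sigmaFinite _
  have hρ (W : Function.support P) :
      ∫⁻ y, (W : Measure Y).rnDeriv (refMeasure P) y ∂refMeasure P = 1 := by
    have hle : (W : Measure Y) ≤ refMeasure P := Measure.le_sum _ W
    rw [Measure.lintegral_rnDeriv (Measure.absolutelyContinuous_of_le hle), measure_univ]
  simp only [meanMass, meanDensity, rpow_one, inv_one]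
  rw [lintegral_tsum (f := fun (W : Function.support P) y =>
      P W * (W : Measure Y).rnDeriv (refMeasure P) y) fun _ =>
    (measurable_const.mul (Measure.measurable_rnDeriv _ _)).aemeasurable]
  simp only [lintegral_const_mul _ (Measure.measurable_rnDeriv _ _), hρ, mul_one]
  exact tsum_support_eq_one hsum

lemma renyiInfo_le_renyiCapacity {𝒲 : Set (Measure Y)} (hP : IsFinPrior 𝒲 P) (α : ℝ≥0∞) :
    renyiInfo α P ≤ renyiCapacity α 𝒲 :=
  le_iSup₂_of_le P hP le_rfl

lemma sub_one_mul_renyiInfo {a : ℝ} (ha : 1 < a) :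
    ((a - 1 : ℝ) : EReal) * renyiInfo (ENNReal.ofReal a) P
      = (a : EReal) * ENNReal.log (meanMass P a) := by
  rw [renyiInfo_eq_mul_log_meanMass ofReal_ne_top (by rw [Ne, ofReal_eq_one]; linarith),
    toReal_ofReal (by linarith), ← mul_assoc, ← EReal.coe_mul,
    mul_div_cancel₀ _ (sub_ne_zero.2 ha.ne')]

lemma mul_log_meanMass_le (hP : (Function.support P).Finite) {a b t : ℝ} (ha : 0 < a)
    (hb : 0 < b) (ht₀ : 0 ≤ t) (ht₁ : t ≤ 1) :
    ((t * a + (1 - t) * b : ℝ) : EReal) * ENNReal.log (meanMass P (t * a + (1 - t) * b))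
      ≤ (t : EReal) * ((a : EReal) * ENNReal.log (meanMass P a))
        + ((1 - t : ℝ) : EReal) * ((b : EReal) * ENNReal.log (meanMass P b)) := by
  set c := t * a + (1 - t) * b
  have hc : 0 < c := lt_convex_combo ha hb ht₀ ht₁
  have hlog := ENNReal.log_le_log (meanMass_le_rpow_mul_rpow hP ha hb ht₀ ht₁)
  rw [ENNReal.log_mul_add, ENNReal.log_rpow, ENNReal.log_rpow] at hlog
  calc (c : EReal) * ENNReal.log (meanMass P c)
      ≤ c * (((t * a / c : ℝ) : EReal) * ENNReal.log (meanMass P a)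
          + (((1 - t) * b / c : ℝ) : EReal) * ENNReal.log (meanMass P b)) :=
        mul_le_mul_of_nonneg_left hlog (EReal.coe_nonneg.2 hc.le)
    _ = _ := by
        rw [EReal.left_distrib_of_nonneg_of_ne_top (EReal.coe_nonneg.2 hc.le)
            (EReal.coe_ne_top _), ← mul_assoc, ← mul_assoc, ← mul_assoc, ← mul_assoc,
          ← EReal.coe_mul, ← EReal.coe_mul, ← EReal.coe_mul, ← EReal.coe_mul,
          mul_div_cancel₀ _ hc.ne', mul_div_cancel₀ _ hc.ne']

theorem sub_one_mul_renyiCapacity_le (𝒲 : Set (Measure Y)) {a b t : ℝ} (ha : 1 < a)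
    (hb : 1 < b) (ht₀ : 0 ≤ t) (ht₁ : t ≤ 1) :
    ((t * a + (1 - t) * b - 1 : ℝ) : EReal)
        * renyiCapacity (ENNReal.ofReal (t * a + (1 - t) * b)) 𝒲
      ≤ ((t : ℝ) : EReal) * (((a - 1 : ℝ) : EReal) * renyiCapacity (ENNReal.ofReal a) 𝒲)
        + (((1 - t : ℝ)) : EReal)
          * (((b - 1 : ℝ) : EReal) * renyiCapacity (ENNReal.ofReal b) 𝒲) := by
  set c := t * a + (1 - t) * b
  have hc : 1 < c := lt_convex_combo ha hb ht₀ ht₁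
  have hc₀ : (0 : EReal) < ((c - 1 : ℝ) : EReal) := EReal.coe_pos.2 (sub_pos.2 hc)
  rw [mul_comm, ← EReal.le_div_iff_mul_le hc₀ (EReal.coe_ne_top _)]
  refine iSup₂_le fun P hP => ?_
  rw [EReal.le_div_iff_mul_le hc₀ (EReal.coe_ne_top _), mul_comm, sub_one_mul_renyiInfo hc]
  calc (c : EReal) * ENNReal.log (meanMass P c)
      ≤ (t : EReal) * ((a : EReal) * ENNReal.log (meanMass P a))
        + ((1 - t : ℝ) : EReal) * ((b : EReal) * ENNReal.log (meanMass P b)) :=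
        mul_log_meanMass_le hP.1 (by linarith) (by linarith) ht₀ ht₁
    _ = (t : EReal) * (((a - 1 : ℝ) : EReal) * renyiInfo (ENNReal.ofReal a) P)
        + ((1 - t : ℝ) : EReal) * (((b - 1 : ℝ) : EReal) * renyiInfo (ENNReal.ofReal b) P) := by
        rw [sub_one_mul_renyiInfo ha, sub_one_mul_renyiInfo hb]
    _ ≤ _ := by gcongr <;> exact renyiInfo_le_renyiCapacity hP _

lemma exists_meanMass_le_rpow {α η : ℝ} (hα : 0 < α) (hη₀ : 0 < η) (hη₁ : η < 1) :
    ∃ κ : ℝ, 0 < κ ∧ ∀ P : Measure Y → ℝ≥0∞, (Function.support P).Finite → ∑' W, P W = 1 →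
      (∀ W ∈ Function.support P, IsProbabilityMeasure W) →
      meanMass P η ≤ meanMass P α ^ κ := by
  rcases le_or_gt η α with hηα | hαη
  · exact ⟨1, one_pos, fun P hP hsum _ => by simpa using meanMass_le_of_le hP hsum hη₀ hηα⟩
  -- `η` is the convex combination of `α` and `1` with weight `t`, and `‖μ_{1,P}‖ = 1`.
  set t := (1 - η) / (1 - α)
  have ht : 0 < t := div_pos (by linarith) (by linarith)
  have ht₁ : t ≤ 1 := div_le_one_of_le₀ (by linarith) (by linarith)
  have hη : t * α + (1 - t) * 1 = η := by
    have hdiv : t * (1 - α) = 1 - η := div_mul_cancel₀ _ (by linarith)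
    linear_combination -hdiv
  refine ⟨t * α / η, div_pos (mul_pos ht hα) hη₀, fun P hP hsum hprob => ?_⟩
  have := meanMass_le_rpow_mul_rpow (P := P) hP hα one_pos ht.le ht₁
  rwa [hη, meanMass_one hP hsum hprob, one_rpow, mul_one] at this

lemma renyiInfo_le_mul_renyiInfo {α η : ℝ≥0∞} (hα₀ : 0 < α) (hα₁ : α < 1) (hη₀ : 0 < η)
    (hη₁ : η < 1) {κ : ℝ} (hκ : 0 < κ) (h : meanMass P η.toReal ≤ meanMass P α.toReal ^ κ) :
    renyiInfo α P
      ≤ ((α.toReal * (1 - η.toReal) / ((1 - α.toReal) * η.toReal * κ) : ℝ) : EReal)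
        * renyiInfo η P := by
  obtain ⟨ha₀, ha₁⟩ := ENNReal.toReal_mem_Ioo_zero_one hα₀ hα₁
  obtain ⟨he₀, he₁⟩ := ENNReal.toReal_mem_Ioo_zero_one hη₀ hη₁
  rw [renyiInfo_eq_mul_log_meanMass hα₁.ne_top hα₁.ne,
    renyiInfo_eq_mul_log_meanMass hη₁.ne_top hη₁.ne]
  set a := α.toReal
  set e := η.toReal
  -- `r` is chosen so that `r * (e / (e - 1)) * κ = a / (a - 1)`; the factor `r * (e / (e - 1))`
  -- is negative, which reverses `hlog`
  set r := a * (1 - e) / ((1 - a) * e * κ)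
  have hlog : ENNReal.log (meanMass P e) ≤ κ * ENNReal.log (meanMass P a) := by
    simpa only [ENNReal.log_rpow] using ENNReal.log_le_log h
  have hs : (((r * (e / (e - 1))) : ℝ) : EReal) ≤ 0 := by
    refine EReal.coe_nonpos.2 (mul_nonpos_of_nonneg_of_nonpos ?_ ?_)
    · exact div_nonneg (mul_nonneg ha₀.le (by linarith)) (by positivity)
    · exact div_nonpos_of_nonneg_of_nonpos he₀.le (by linarith)
  calc ((a / (a - 1) : ℝ) : EReal) * ENNReal.log (meanMass P a)
      = (κ * ENNReal.log (meanMass P a)) * ((r * (e / (e - 1)) : ℝ) : EReal) := by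
        rw [mul_right_comm, ← EReal.coe_mul]
        congr 2
        have : a - 1 ≠ 0 := by linarith
        have : 1 - a ≠ 0 := by linarith
        have : e - 1 ≠ 0 := by linarith
        simp only [r]
        field_simp
        ring
    _ ≤ ENNReal.log (meanMass P e) * ((r * (e / (e - 1)) : ℝ) : EReal) :=
        EReal.mul_le_mul_of_nonpos_right hlog hs
    _ = (r : EReal) * (((e / (e - 1) : ℝ) : EReal) * ENNReal.log (meanMass P e)) := by
        rw [mul_comm, EReal.coe_mul, mul_assoc]

theorem renyiCapacity_lt_top_of_lt_one {𝒲 : Set (Measure Y)}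
    (h𝒲 : ∀ W ∈ 𝒲, IsProbabilityMeasure W) {η : ℝ≥0∞} (hη₀ : 0 < η) (hη₁ : η < 1)
    (hη : renyiCapacity η 𝒲 < ⊤) {α : ℝ≥0∞} (hα₀ : 0 < α) (hα₁ : α < 1) :
    renyiCapacity α 𝒲 < ⊤ := by
  obtain ⟨ha₀, ha₁⟩ := ENNReal.toReal_mem_Ioo_zero_one hα₀ hα₁
  obtain ⟨he₀, he₁⟩ := ENNReal.toReal_mem_Ioo_zero_one hη₀ hη₁
  obtain ⟨κ, hκ, hmass⟩ := exists_meanMass_le_rpow (Y := Y) ha₀ he₀ he₁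
  set r := α.toReal * (1 - η.toReal) / ((1 - α.toReal) * η.toReal * κ)
  have hr : 0 < r := div_pos (mul_pos ha₀ (by linarith)) (by positivity)
  have hle : renyiCapacity α 𝒲 ≤ (r : EReal) * renyiCapacity η 𝒲 := by
    refine iSup₂_le fun P ⟨hP, hsupp, hsum⟩ => ?_
    have hmassP := hmass P hP hsum fun W hW => h𝒲 W (hsupp hW)
    exact (renyiInfo_le_mul_renyiInfo hα₀ hα₁ hη₀ hη₁ hκ hmassP).trans <|
      mul_le_mul_of_nonneg_left (renyiInfo_le_renyiCapacity ⟨hP, hsupp, hsum⟩ η)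
        (EReal.coe_nonneg.2 hr.le)
  refine hle.trans_lt (lt_top_iff_ne_top.2 ((EReal.mul_ne_top _ _).2 ?_))
  exact ⟨.inl (EReal.coe_ne_bot r), .inl (EReal.coe_nonneg.2 hr.le), .inl (EReal.coe_ne_top r),
    .inr hη.ne⟩

/-- `(α−1)·C_α(𝒲)` is convex in `α` on `(1,∞)`, and finiteness of `C_η(𝒲)` for a single
`η ∈ (0,1)` implies finiteness of `C_α(𝒲)` for every `α ∈ (0,1)`. -/
theorem renyi_capacity_convexity_and_finiteness {Y : Type*} [MeasurableSpace Y]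
    (𝒲 : Set (Measure Y)) (h𝒲 : ∀ W ∈ 𝒲, IsProbabilityMeasure W) :
    (∀ a b : ℝ, 1 < a → 1 < b → ∀ t : ℝ, 0 ≤ t → t ≤ 1 →
      ((t * a + (1 - t) * b - 1 : ℝ) : EReal)
          * renyiCapacity (ENNReal.ofReal (t * a + (1 - t) * b)) 𝒲
        ≤ ((t : ℝ) : EReal) * (((a - 1 : ℝ) : EReal) * renyiCapacity (ENNReal.ofReal a) 𝒲)
          + (((1 - t : ℝ)) : EReal)
            * (((b - 1 : ℝ) : EReal) * renyiCapacity (ENNReal.ofReal b) 𝒲)) ∧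
    (∀ η : ℝ≥0∞, 0 < η → η < 1 → renyiCapacity η 𝒲 < ⊤ →
      ∀ α : ℝ≥0∞, 0 < α → α < 1 → renyiCapacity α 𝒲 < ⊤) :=
  ⟨fun _ _ ha hb _ ht₀ ht₁ => sub_one_mul_renyiCapacity_le 𝒲 ha hb ht₀ ht₁,
    fun _ hη₀ hη₁ hη _ hα₀ hα₁ => renyiCapacity_lt_top_of_lt_one h𝒲 hη₀ hη₁ hη hα₀ hα₁⟩

end RenyiPaper
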